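/- arXiv:1803.06623 — 2 statements merged into one kernel-verified Lean document; each statement's English description precedes it below -/
import Mathlib

section
/- For n ≥ 1 and 1 ≤ p < ∞, the norm on S_n^p given by ‖f‖ = ‖f‖_{H^p} + ‖f'‖_{H^p} + ⋯ + ‖f^{(n)}‖_{H^p} is equivalent to the recursively defined norm ‖f‖_{S_n^p} = |f(0)| + ‖f'‖_{S_{n-1}^p}. -/
open MeasureTheory Metric Set Filter

/-- The Hardy space `p`-norm on the unit disk (as an extended real). -/
noncomputable def hardyNorm (p : ℝ) (f : ℂ → ℂ) : ENNReal :=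
  ⨆ r : Set.Ioo (0:ℝ) 1,
    ((∫⁻ θ in Set.Ioc (0:ℝ) (2*Real.pi),
        ENNReal.ofReal (‖f ((r:ℝ) * Complex.exp (θ * Complex.I))‖ ^ p)) /
      ENNReal.ofReal (2*Real.pi)) ^ (1/p)

/-- Sup norm over the unit disk. -/
noncomputable def supNorm (f : ℂ → ℂ) : ENNReal :=
  ⨆ z ∈ Metric.ball (0:ℂ) 1, ENNReal.ofReal ‖f z‖

/-- The recursively defined norm of `S_n^p`: `‖f‖_{S_n^p} = |f 0| + ‖f'‖_{S_{n-1}^p}`. -/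
noncomputable def snNorm : ℕ → ℝ → (ℂ → ℂ) → ENNReal
  | 0, p, f => hardyNorm p f
  | n+1, p, f => ENNReal.ofReal ‖f 0‖ + snNorm n p (deriv f)

/-- Membership in the Hardy space `H^p` of the unit disk. -/
def MemHp (p : ℝ) (f : ℂ → ℂ) : Prop :=
  DifferentiableOn ℂ f (Metric.ball 0 1) ∧ hardyNorm p f < ⊤

/-- Membership in `S_n^p`: analytic on the disk with `n`-th derivative in `H^p`. -/
def MemS (n : ℕ) (p : ℝ) (f : ℂ → ℂ) : Prop :=
  DifferentiableOn ℂ f (Metric.ball 0 1) ∧ hardyNorm p (iteratedDeriv n f) < ⊤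

/-- Membership in `S_{n,0}^p`: members of `S_n^p` whose first `n` Taylor coefficients vanish. -/
def MemS0 (n : ℕ) (p : ℝ) (f : ℂ → ℂ) : Prop :=
  MemS n p f ∧ ∀ m < n, iteratedDeriv m f 0 = 0

/-- `(V_n f)(z) = (1/(n-1)!) ∫_0^z (z-ζ)^{n-1} f(ζ) dζ`, along the segment `ζ = t z`. -/
noncomputable def Vop (n : ℕ) (f : ℂ → ℂ) (z : ℂ) : ℂ :=
  (1 / (Nat.factorial (n-1) : ℂ)) *
    ∫ t in (0:ℝ)..1, z * (z - (t:ℂ) * z) ^ (n-1) * f ((t:ℂ) * z)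

/-- The Volterra operator `(T_z f)(z) = ∫_0^z f(ω) dω` along the segment. -/
noncomputable def Volterra (f : ℂ → ℂ) (z : ℂ) : ℂ :=
  ∫ t in (0:ℝ)..1, z * f ((t:ℂ) * z)

/-!
By the mean value property and Jensen's inequality, `|g(0)|` is bounded by every integral mean
`M_p(r, g)`, hence by `‖g‖_{H^p}`; this bounds each term of the recursive norm.
Conversely, `g(w) = g(0) + ∫₀¹ w g'(tw) dt` on the disk; raising to the `p`-th power, applying
Jensen in `t` and Fubini in `(θ, t)` gives `‖g‖_{H^p} ≤ 2 (|g(0)| + ‖g'‖_{H^p})`. Iterating,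
`‖f^{(k)}‖_{H^p} ≤ 2^n ‖f‖_{S_n^p}` for `k ≤ n`.
-/

open Complex

lemma lintegral_div_le_rpow_lintegral_rpow_div {α : Type*} [MeasurableSpace α] {μ : Measure α}
    {F : α → ENNReal} (hF : AEMeasurable F μ) {c : ENNReal} (hc : μ univ = c) (hc0 : c ≠ 0)
    (hct : c ≠ ⊤) {p : ℝ} (hp : 1 ≤ p) :
    (∫⁻ x, F x ∂μ) / c ≤ ((∫⁻ x, F x ^ p ∂μ) / c) ^ (1 / p) := by
  rcases hp.eq_or_lt with rfl | hp
  · simp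
  have hpq : p.HolderConjugate (p / (p - 1)) := .conjExponent hp
  have hHolder := ENNReal.lintegral_mul_le_Lp_mul_Lq μ hpq hF aemeasurable_const (g := 1)
  simp only [Pi.mul_apply, Pi.one_apply, mul_one, ENNReal.one_rpow, lintegral_const, hc,
    one_mul] at hHolder
  have hc_rpow : c ^ (1 / (p / (p - 1))) = c / c ^ (1 / p) := by
    rw [show 1 / (p / (p - 1)) = 1 - 1 / p by field_simp,
      ENNReal.rpow_sub _ _ hc0 hct, ENNReal.rpow_one]
  rw [ENNReal.div_rpow_of_nonneg _ _ (by positivity), ENNReal.div_le_iff hc0 hct]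
  calc (∫⁻ x, F x ∂μ) ≤ (∫⁻ x, F x ^ p ∂μ) ^ (1 / p) * c ^ (1 / (p / (p - 1))) := hHolder
    _ = (∫⁻ x, F x ^ p ∂μ) ^ (1 / p) / c ^ (1 / p) * c := by
      rw [hc_rpow]; simp only [div_eq_mul_inv]; ring

lemma ofReal_norm_rpow {E : Type*} [SeminormedAddGroup E] (x : E) {p : ℝ} (hp : 0 ≤ p) :
    ENNReal.ofReal (‖x‖ ^ p) = ‖x‖ₑ ^ p := by
  rw [← ENNReal.ofReal_rpow_of_nonneg (norm_nonneg x) hp, ofReal_norm]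

/-- The integral mean `M_p(r, f)`. -/
noncomputable def integralMean (p : ℝ) (f : ℂ → ℂ) (r : ℝ) : ENNReal :=
  ((∫⁻ θ in Ioc 0 (2 * Real.pi), ‖f (r * exp (θ * I))‖ₑ ^ p) /
    ENNReal.ofReal (2 * Real.pi)) ^ (1 / p)

lemma hardyNorm_eq_iSup_integralMean {p : ℝ} (hp : 0 ≤ p) (f : ℂ → ℂ) :
    hardyNorm p f = ⨆ r : Ioo (0 : ℝ) 1, integralMean p f r := by
  simp only [hardyNorm, integralMean, ofReal_norm_rpow _ hp]

lemma integralMean_le_hardyNorm {p : ℝ} (hp : 0 ≤ p) (f : ℂ → ℂ) {r : ℝ} (hr : r ∈ Ioo 0 1) :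
    integralMean p f r ≤ hardyNorm p f := by
  rw [hardyNorm_eq_iSup_integralMean hp]
  exact le_iSup (fun r : Ioo (0 : ℝ) 1 => integralMean p f r) ⟨r, hr⟩

lemma lintegral_circle_le_hardyNorm_rpow {p : ℝ} (hp : 0 < p) (f : ℂ → ℂ) {r : ℝ}
    (hr : r ∈ Ioo 0 1) :
    ∫⁻ θ in Ioc 0 (2 * Real.pi), ‖f (r * exp (θ * I))‖ₑ ^ p ≤
      ENNReal.ofReal (2 * Real.pi) * hardyNorm p f ^ p := by
  have h := ENNReal.rpow_le_rpow (integralMean_le_hardyNorm hp.le f hr) hp.le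
  rw [integralMean, ← ENNReal.rpow_mul, one_div_mul_cancel hp.ne', ENNReal.rpow_one,
    ENNReal.div_le_iff (by simp [Real.pi_pos]) ENNReal.ofReal_ne_top] at h
  exact h.trans_eq (mul_comm _ _)

lemma enorm_apply_zero_le_integralMean {g : ℂ → ℂ} (hg : DifferentiableOn ℂ g (ball 0 1))
    {r : ℝ} (hr : r ∈ Ioo 0 1) {p : ℝ} (hp : 1 ≤ p) : ‖g 0‖ₑ ≤ integralMean p g r := by
  have h2π : 0 < 2 * Real.pi := by positivity
  have hmean : Real.circleAverage g 0 r = g 0 := by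
    refine DiffContOnCl.circleAverage (hg.mono ?_).diffContOnCl
    rw [closure_ball _ (abs_pos.mpr hr.1.ne').ne']
    exact closedBall_subset_ball (by rw [abs_of_pos hr.1]; exact hr.2)
  have hcont : Continuous fun θ : ℝ => g (r * exp (θ * I)) := by
    refine hg.continuousOn.comp_continuous (by fun_prop) fun θ => ?_
    simpa [abs_of_pos hr.1] using hr.2
  have h_avg : ‖g 0‖ₑ ≤ (∫⁻ θ in Ioc 0 (2 * Real.pi), ‖g (r * exp (θ * I))‖ₑ) /
      ENNReal.ofReal (2 * Real.pi) := by
    rw [← hmean, Real.circleAverage_def, enorm_smul, intervalIntegral.integral_of_le h2π.le,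
      ENNReal.div_eq_inv_mul, ← ENNReal.ofReal_inv_of_pos h2π]
    simp only [circleMap_zero]
    gcongr
    · exact (Real.enorm_of_nonneg (by positivity)).le
    · exact enorm_integral_le_lintegral_enorm _
  refine h_avg.trans (lintegral_div_le_rpow_lintegral_rpow_div ?_ ?_ ?_ ENNReal.ofReal_ne_top hp)
  · exact (continuous_enorm.comp hcont).measurable.aemeasurable
  · simp [Real.volume_Ioc]
  · simp [Real.pi_pos]

lemma eq_add_integral_deriv_segment {R : ℝ} {g : ℂ → ℂ} (hg : DifferentiableOn ℂ g (ball 0 R))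
    {w : ℂ} (hw : w ∈ ball 0 R) :
    g w = g 0 + ∫ t in (0 : ℝ)..1, w * deriv g (t * w) := by
  have hseg : ∀ t ∈ uIcc (0 : ℝ) 1, (t : ℂ) * w ∈ ball 0 R := by
    intro t ht
    rw [uIcc_of_le zero_le_one] at ht
    have h0 : (0 : ℂ) ∈ ball 0 R := mem_ball_self (pos_of_mem_ball hw)
    simpa [Complex.real_smul] using (convex_ball (0 : ℂ) R).smul_mem_of_zero_mem h0 hw ht
  have hderiv : ∀ t ∈ uIcc (0 : ℝ) 1,
      HasDerivAt (fun t : ℝ => g (t * w)) (w * deriv g (t * w)) t := by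
    intro t ht
    have hg_at := (hg.differentiableAt (isOpen_ball.mem_nhds (hseg t ht))).hasDerivAt
    simpa [mul_comm] using (hg_at.comp (t : ℂ) ((hasDerivAt_id (t : ℂ)).mul_const w)).comp_ofReal
  have hint : IntervalIntegrable (fun t : ℝ => w * deriv g (t * w)) volume 0 1 := by
    refine (continuousOn_const.mul ?_).intervalIntegrable
    exact (hg.deriv isOpen_ball).continuousOn.comp (by fun_prop) hseg
  rw [intervalIntegral.integral_eq_sub_of_hasDerivAt hderiv hint]
  simp

lemma enorm_le_enorm_apply_zero_add_lintegral_deriv {g : ℂ → ℂ}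
    (hg : DifferentiableOn ℂ g (ball 0 1)) {w : ℂ} (hw : w ∈ ball 0 1) :
    ‖g w‖ₑ ≤ ‖g 0‖ₑ + ∫⁻ t in Ioc (0 : ℝ) 1, ‖deriv g (t * w)‖ₑ := by
  rw [eq_add_integral_deriv_segment hg hw, intervalIntegral.integral_of_le zero_le_one]
  refine (enorm_add_le _ _).trans (add_le_add le_rfl ?_)
  refine (enorm_integral_le_lintegral_enorm _).trans (lintegral_mono fun t => ?_)
  rw [enorm_mul]
  exact mul_le_of_le_one_left' (by simpa [← ofReal_norm] using (mem_ball_zero_iff.mp hw).le)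

lemma enorm_rpow_le_of_lintegral_deriv {g : ℂ → ℂ} (hg : DifferentiableOn ℂ g (ball 0 1))
    {w : ℂ} (hw : w ∈ ball 0 1) {p : ℝ} (hp : 1 ≤ p) :
    ‖g w‖ₑ ^ p ≤ 2 ^ (p - 1) * (‖g 0‖ₑ ^ p + ∫⁻ t in Ioc (0 : ℝ) 1, ‖deriv g (t * w)‖ₑ ^ p) := by
  have hp0 : 0 ≤ p := zero_le_one.trans hp
  have hjensen : (∫⁻ t in Ioc (0 : ℝ) 1, ‖deriv g (t * w)‖ₑ) ^ p ≤
      ∫⁻ t in Ioc (0 : ℝ) 1, ‖deriv g (t * w)‖ₑ ^ p := by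
    have hmeas : Measurable fun t : ℝ => ‖deriv g (t * w)‖ₑ :=
      (measurable_deriv g).enorm.comp (by fun_prop)
    have h := ENNReal.rpow_le_rpow (lintegral_div_le_rpow_lintegral_rpow_div
      (μ := volume.restrict (Ioc (0 : ℝ) 1)) hmeas.aemeasurable (by simp) one_ne_zero
      ENNReal.one_ne_top hp) hp0
    rwa [div_one, div_one, ← ENNReal.rpow_mul, one_div_mul_cancel (by positivity),
      ENNReal.rpow_one] at h
  calc ‖g w‖ₑ ^ p ≤ (‖g 0‖ₑ + ∫⁻ t in Ioc (0 : ℝ) 1, ‖deriv g (t * w)‖ₑ) ^ p :=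
        ENNReal.rpow_le_rpow (enorm_le_enorm_apply_zero_add_lintegral_deriv hg hw) hp0
    _ ≤ 2 ^ (p - 1) * (‖g 0‖ₑ ^ p + (∫⁻ t in Ioc (0 : ℝ) 1, ‖deriv g (t * w)‖ₑ) ^ p) :=
        ENNReal.rpow_add_le_mul_rpow_add_rpow _ _ hp
    _ ≤ _ := by gcongr

lemma lintegral_lintegral_radial_le_hardyNorm_rpow {f : ℂ → ℂ} (hf : Measurable f) {p : ℝ}
    (hp : 0 < p) {r : ℝ} (hr : r ∈ Ioo 0 1) :
    ∫⁻ θ in Ioc 0 (2 * Real.pi), ∫⁻ t in Ioc (0 : ℝ) 1, ‖f (t * (r * exp (θ * I)))‖ₑ ^ p ≤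
      ENNReal.ofReal (2 * Real.pi) * hardyNorm p f ^ p := by
  have hmeas : Measurable fun q : ℝ × ℝ => ‖f (q.2 * (r * exp (q.1 * I)))‖ₑ ^ p :=
    (hf.enorm.pow_const p).comp (by fun_prop)
  rw [lintegral_lintegral_swap hmeas.aemeasurable]
  calc ∫⁻ t in Ioc (0 : ℝ) 1, ∫⁻ θ in Ioc 0 (2 * Real.pi), ‖f (t * (r * exp (θ * I)))‖ₑ ^ p
      ≤ ∫⁻ _ in Ioc (0 : ℝ) 1, ENNReal.ofReal (2 * Real.pi) * hardyNorm p f ^ p := by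
        refine setLIntegral_mono measurable_const fun t ht => ?_
        have htr : t * r ∈ Ioo 0 1 :=
          ⟨mul_pos ht.1 hr.1, (mul_le_of_le_one_left hr.1.le ht.2).trans_lt hr.2⟩
        convert lintegral_circle_le_hardyNorm_rpow hp f htr using 6
        push_cast
        ring
    _ = ENNReal.ofReal (2 * Real.pi) * hardyNorm p f ^ p := by simp

lemma rpow_one_div_two_rpow_mul_add_le (a b : ENNReal) {p : ℝ} (hp : 1 ≤ p) :
    (2 ^ (p - 1) * (a ^ p + b ^ p)) ^ (1 / p) ≤ 2 * (a + b) := by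
  have hp0 : 0 < p := zero_lt_one.trans_le hp
  rw [ENNReal.mul_rpow_of_nonneg _ _ (by positivity), ← ENNReal.rpow_mul]
  gcongr
  · calc (2 : ENNReal) ^ ((p - 1) * (1 / p)) ≤ 2 ^ (1 : ℝ) := by
          gcongr
          · norm_num
          · rw [mul_one_div, div_le_one hp0]; linarith
      _ = 2 := ENNReal.rpow_one 2
  · exact ENNReal.rpow_add_rpow_le_add a b hp

lemma hardyNorm_le_two_mul {g : ℂ → ℂ} (hg : DifferentiableOn ℂ g (ball 0 1)) {p : ℝ}
    (hp : 1 ≤ p) : hardyNorm p g ≤ 2 * (‖g 0‖ₑ + hardyNorm p (deriv g)) := by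
  have hp0 : 0 < p := zero_lt_one.trans_le hp
  rw [hardyNorm_eq_iSup_integralMean hp0.le]
  refine iSup_le fun ⟨r, hr⟩ => ?_
  refine le_trans ?_ (rpow_one_div_two_rpow_mul_add_le _ _ hp)
  refine ENNReal.rpow_le_rpow (ENNReal.div_le_of_le_mul ?_) (by positivity)
  have hball : ∀ θ : ℝ, (r : ℂ) * exp (θ * I) ∈ ball 0 1 := fun θ => by
    simpa [abs_of_pos hr.1] using hr.2
  calc ∫⁻ θ in Ioc 0 (2 * Real.pi), ‖g (r * exp (θ * I))‖ₑ ^ p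
      ≤ ∫⁻ θ in Ioc 0 (2 * Real.pi), 2 ^ (p - 1) * (‖g 0‖ₑ ^ p +
          ∫⁻ t in Ioc (0 : ℝ) 1, ‖deriv g (t * (r * exp (θ * I)))‖ₑ ^ p) :=
        lintegral_mono fun θ => enorm_rpow_le_of_lintegral_deriv hg (hball θ) hp
    _ = 2 ^ (p - 1) * (‖g 0‖ₑ ^ p * ENNReal.ofReal (2 * Real.pi) + ∫⁻ θ in Ioc 0 (2 * Real.pi),
          ∫⁻ t in Ioc (0 : ℝ) 1, ‖deriv g (t * (r * exp (θ * I)))‖ₑ ^ p) := by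
        rw [lintegral_const_mul' _ _ (by simp), lintegral_add_left measurable_const,
          setLIntegral_const, Real.volume_Ioc, sub_zero]
    _ ≤ 2 ^ (p - 1) * (‖g 0‖ₑ ^ p * ENNReal.ofReal (2 * Real.pi) +
          ENNReal.ofReal (2 * Real.pi) * hardyNorm p (deriv g) ^ p) := by
        gcongr
        exact lintegral_lintegral_radial_le_hardyNorm_rpow (measurable_deriv g) hp0 hr
    _ = 2 ^ (p - 1) * (‖g 0‖ₑ ^ p + hardyNorm p (deriv g) ^ p) *
          ENNReal.ofReal (2 * Real.pi) := by ring

lemma enorm_apply_zero_le_hardyNorm {g : ℂ → ℂ} (hg : DifferentiableOn ℂ g (ball 0 1)) {p : ℝ}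
    (hp : 1 ≤ p) : ‖g 0‖ₑ ≤ hardyNorm p g :=
  have hr : (1 / 2 : ℝ) ∈ Ioo 0 1 := by norm_num
  (enorm_apply_zero_le_integralMean hg hr hp).trans
    (integralMean_le_hardyNorm (zero_le_one.trans hp) g hr)

lemma snNorm_le_sum_hardyNorm {p : ℝ} (hp : 1 ≤ p) (n : ℕ) {f : ℂ → ℂ}
    (hf : DifferentiableOn ℂ f (ball 0 1)) :
    snNorm n p f ≤ ∑ k ∈ Finset.range (n + 1), hardyNorm p (iteratedDeriv k f) := by
  induction n generalizing f with
  | zero => simp [snNorm]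
  | succ n ih =>
    rw [snNorm, ofReal_norm, Finset.sum_range_succ', iteratedDeriv_zero]
    simp only [iteratedDeriv_succ']
    rw [add_comm (∑ _ ∈ _, _)]
    exact add_le_add (enorm_apply_zero_le_hardyNorm hf hp) (ih (hf.deriv isOpen_ball))

lemma hardyNorm_le_two_pow_mul_snNorm {p : ℝ} (hp : 1 ≤ p) (n : ℕ) {g : ℂ → ℂ}
    (hg : DifferentiableOn ℂ g (ball 0 1)) : hardyNorm p g ≤ 2 ^ n * snNorm n p g := by
  induction n generalizing g with
  | zero => simp [snNorm]
  | succ n ih =>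
    calc hardyNorm p g ≤ 2 * (‖g 0‖ₑ + hardyNorm p (deriv g)) := hardyNorm_le_two_mul hg hp
      _ ≤ 2 * (2 ^ n * ‖g 0‖ₑ + 2 ^ n * snNorm n p (deriv g)) := by
        gcongr
        · exact le_mul_of_one_le_left' (one_le_pow₀ one_le_two)
        · exact ih (hg.deriv isOpen_ball)
      _ = 2 ^ (n + 1) * snNorm (n + 1) p g := by
        rw [snNorm, ofReal_norm]
        ring

lemma snNorm_iteratedDeriv_le (p : ℝ) (m j : ℕ) (f : ℂ → ℂ) :
    snNorm m p (iteratedDeriv j f) ≤ snNorm (m + j) p f := by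
  induction j generalizing f with
  | zero => simp
  | succ j ih =>
    rw [iteratedDeriv_succ', ← add_assoc, snNorm]
    exact (ih (deriv f)).trans le_add_self

lemma hardyNorm_iteratedDeriv_le_snNorm {p : ℝ} (hp : 1 ≤ p) {n k : ℕ} (hk : k ≤ n) {f : ℂ → ℂ}
    (hf : DifferentiableOn ℂ f (ball 0 1)) :
    hardyNorm p (iteratedDeriv k f) ≤ 2 ^ n * snNorm n p f := by
  have hfk : DifferentiableOn ℂ (iteratedDeriv k f) (ball 0 1) := by
    rw [iteratedDeriv_eq_iterate]
    exact ((hf.analyticOnNhd isOpen_ball).iterated_deriv k).differentiableOn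
  calc hardyNorm p (iteratedDeriv k f) ≤ 2 ^ (n - k) * snNorm (n - k) p (iteratedDeriv k f) :=
        hardyNorm_le_two_pow_mul_snNorm hp (n - k) hfk
    _ ≤ 2 ^ n * snNorm n p f := by
        gcongr
        · exact one_le_two
        · exact Nat.sub_le n k
        · simpa [Nat.sub_add_cancel hk] using snNorm_iteratedDeriv_le p (n - k) k f

theorem equiv_norm_hardy_sum_general (n : ℕ) (p : ℝ) (hp : 1 ≤ p) :
    ∃ C₁ C₂ : ℝ, 0 < C₁ ∧ 0 < C₂ ∧ ∀ f : ℂ → ℂ, MemS n p f →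
      snNorm n p f ≤
        ENNReal.ofReal C₁ * ∑ k ∈ Finset.range (n+1), hardyNorm p (iteratedDeriv k f) ∧
      ∑ k ∈ Finset.range (n+1), hardyNorm p (iteratedDeriv k f) ≤
        ENNReal.ofReal C₂ * snNorm n p f := by
  refine ⟨1, (n + 1) * 2 ^ n, one_pos, by positivity, fun f ⟨hf, _⟩ => ⟨?_, ?_⟩⟩
  · simpa using snNorm_le_sum_hardyNorm hp n hf
  · calc ∑ k ∈ Finset.range (n + 1), hardyNorm p (iteratedDeriv k f)
        ≤ ∑ _k ∈ Finset.range (n + 1), 2 ^ n * snNorm n p f :=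
          Finset.sum_le_sum fun k hk =>
            hardyNorm_iteratedDeriv_le_snNorm hp (Finset.mem_range_succ_iff.mp hk) hf
      _ = ENNReal.ofReal ((n + 1) * 2 ^ n) * snNorm n p f := by
          rw [Finset.sum_const, Finset.card_range, nsmul_eq_mul, ← mul_assoc,
            ENNReal.ofReal_mul (by positivity), ENNReal.ofReal_pow zero_le_two]
          norm_cast

theorem equiv_norm_hardy_sum (n : ℕ) (p : ℝ) (hn : 1 ≤ n) (hp : 1 ≤ p) :
    ∃ C₁ C₂ : ℝ, 0 < C₁ ∧ 0 < C₂ ∧ ∀ f : ℂ → ℂ, MemS n p f →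
      snNorm n p f ≤
        ENNReal.ofReal C₁ * ∑ k ∈ Finset.range (n+1), hardyNorm p (iteratedDeriv k f) ∧
      ∑ k ∈ Finset.range (n+1), hardyNorm p (iteratedDeriv k f) ≤
        ENNReal.ofReal C₂ * snNorm n p f :=
  equiv_norm_hardy_sum_general n p hp
end

section
/- Let n ≥ 1, 1 ≤ p < ∞, and let T = M_z + n T_z on H^p. A closed subspace ℳ ⊆ H^p is invariant under T if and only if ℳ = (d^n/dz^n)(𝒥) for some closed M_z-invariant subspace 𝒥 of S_{n,0}^p. -/
/-!
By Leibniz' rule `(z f)⁽ⁿ⁾ = z f⁽ⁿ⁾ + n f⁽ⁿ⁻¹⁾`, and when `f⁽ⁿ⁻¹⁾(0) = 0` the fundamental theorem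
of calculus along `[0, z]` turns `f⁽ⁿ⁻¹⁾` into `T_z f⁽ⁿ⁾`; so `d^n/dz^n` carries `M_z` on
`S_{n,0}^p` to `T = M_z + n T_z`, and the image of an `M_z`-invariant `𝒥` is `T`-invariant.
Conversely, every holomorphic function on the disk has an `n`-fold primitive in `S_{n,0}^p`
(Morera), so a `T`-invariant `ℳ` is the image of `𝒥 = S_{n,0}^p ∩ (d^n/dz^n)⁻¹ ℳ`, which
inherits from `ℳ` linearity, closedness (the `S_n^p` norm dominates the `H^p` norm of the
`n`-th derivative) and `M_z`-invariance.
-/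

open MeasureTheory Metric Set Filter

lemma DifferentiableOn.iteratedDeriv_of_isOpen {U : Set ℂ} {f : ℂ → ℂ} (hU : IsOpen U)
    (hf : DifferentiableOn ℂ f U) (k : ℕ) : DifferentiableOn ℂ (iteratedDeriv k f) U := by
  rw [iteratedDeriv_eq_iterate]
  exact ((hf.analyticOnNhd hU).iterated_deriv k).differentiableOn

lemma DifferentiableOn.contDiffAt_of_isOpen {U : Set ℂ} {f : ℂ → ℂ} {x : ℂ} {n : WithTop ℕ∞}
    (hU : IsOpen U) (hf : DifferentiableOn ℂ f U) (hx : x ∈ U) : ContDiffAt ℂ n f x :=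
  (hf.contDiffOn hU).contDiffAt (hU.mem_nhds hx)

lemma iteratedDeriv_succ_id_mul {𝕜 : Type*} [NontriviallyNormedField 𝕜] {f : 𝕜 → 𝕜} {x : 𝕜}
    {n : ℕ} (hf : ContDiffAt 𝕜 (n + 1 : ℕ) f x) :
    iteratedDeriv (n + 1) (fun z => z * f z) x
      = x * iteratedDeriv (n + 1) f x + (n + 1) * iteratedDeriv n f x := by
  rw [iteratedDeriv_fun_mul (f := fun z => z) contDiffAt_id hf, Finset.sum_range_succ',
    Finset.sum_range_succ']
  simp [iteratedDeriv_fun_id, add_comm, mul_comm]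

lemma ofReal_mul_mem_ball_zero {z : ℂ} {r : ℝ} (hz : z ∈ ball (0 : ℂ) r) {t : ℝ}
    (ht : t ∈ Icc (0 : ℝ) 1) : (t : ℂ) * z ∈ ball (0 : ℂ) r := by
  simpa [Complex.real_smul] using
    (convex_ball (0 : ℂ) r).smul_mem_of_zero_mem (mem_ball_self (pos_of_mem_ball hz)) hz ht

lemma volterra_congr {g g' : ℂ → ℂ} {r : ℝ} (h : EqOn g g' (ball 0 r)) :
    EqOn (Volterra g) (Volterra g') (ball 0 r) := fun z hz =>
  intervalIntegral.integral_congr fun t ht => by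
    rw [uIcc_of_le zero_le_one] at ht
    simp only [h (ofReal_mul_mem_ball_zero hz ht)]

lemma volterra_deriv {h : ℂ → ℂ} {r : ℝ} (hd : DifferentiableOn ℂ h (ball 0 r)) {z : ℂ}
    (hz : z ∈ ball 0 r) : Volterra (deriv h) z = h z - h 0 := by
  have hseg : ∀ t ∈ Icc (0 : ℝ) 1, (0 : ℂ) + t • z ∈ ball (0 : ℂ) r := fun t ht => by
    simpa [Complex.real_smul] using ofReal_mul_mem_ball_zero hz ht
  have hcont : ContinuousOn (deriv h) (ball 0 r) :=
    ((hd.analyticOnNhd isOpen_ball).deriv).continuousOn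
  have hftc := intervalIntegral.integral_unitInterval_deriv_eq_sub (f := h) (z₀ := 0) (z₁ := z)
    (hcont.comp (by fun_prop) hseg) fun t ht =>
      (hd.differentiableAt (isOpen_ball.mem_nhds (hseg t ht))).hasDerivAt
  simpa [Volterra, intervalIntegral.integral_const_mul, Complex.real_smul] using hftc

lemma exists_iteratedDeriv_eqOn_ball {g : ℂ → ℂ} {c : ℂ} {r : ℝ} (hr : 0 < r)
    (hg : DifferentiableOn ℂ g (ball c r)) (n : ℕ) :
    ∃ f : ℂ → ℂ, DifferentiableOn ℂ f (ball c r) ∧ (∀ m < n, iteratedDeriv m f c = 0) ∧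
      EqOn (iteratedDeriv n f) g (ball c r) := by
  induction n with
  | zero => exact ⟨g, hg, fun m hm => absurd hm m.not_lt_zero, fun z _ => rfl⟩
  | succ n ih =>
    obtain ⟨f, hfd, hf0, hfg⟩ := ih
    obtain ⟨F, hF0, hF⟩ := hfd.isExactOn_ball.with_val_at c 0
    have hderiv : EqOn (deriv F) f (ball c r) := fun z hz => (hF z hz).deriv
    have hshift : ∀ k, EqOn (iteratedDeriv (k + 1) F) (iteratedDeriv k f) (ball c r) := fun k =>
      iteratedDeriv_succ' (f := F) ▸ hderiv.iteratedDeriv_of_isOpen isOpen_ball k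
    refine ⟨F, fun z hz => (hF z hz).differentiableAt.differentiableWithinAt, ?_,
      fun z hz => (hshift n hz).trans (hfg hz)⟩
    rintro (_ | k) hk
    · simpa using hF0
    · rw [hshift k (mem_ball_self hr)]
      exact hf0 k (by omega)

lemma hardyNorm_congr {p : ℝ} {f g : ℂ → ℂ} (h : EqOn f g (ball 0 1)) :
    hardyNorm p f = hardyNorm p g := by
  unfold hardyNorm
  congr! 6 with r θ
  rw [h]
  simp [abs_of_pos r.2.1, r.2.2]

lemma hardyNorm_iteratedDeriv_le_snNorm_s18 (n : ℕ) (p : ℝ) (f : ℂ → ℂ) :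
    hardyNorm p (iteratedDeriv n f) ≤ snNorm n p f := by
  induction n generalizing f with
  | zero => rfl
  | succ n ih => exact iteratedDeriv_succ' (f := f) ▸ (ih (deriv f)).trans le_add_self

lemma iteratedDeriv_id_mul_eqOn {n : ℕ} {r : ℝ} {f g : ℂ → ℂ}
    (hf : DifferentiableOn ℂ f (ball 0 r)) (hf0 : ∀ m < n, iteratedDeriv m f 0 = 0)
    (hfg : EqOn (iteratedDeriv n f) g (ball 0 r)) :
    EqOn (iteratedDeriv n (fun z => z * f z)) (fun z => z * g z + n * Volterra g z)
      (ball 0 r) := by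
  intro z hz
  beta_reduce
  cases n with
  | zero => simp [← hfg hz]
  | succ m =>
    have hV : Volterra g z = iteratedDeriv m f z := by
      rw [← volterra_congr hfg hz, iteratedDeriv_succ,
        volterra_deriv (hf.iteratedDeriv_of_isOpen isOpen_ball m) hz, hf0 m m.lt_succ_self,
        sub_zero]
    rw [iteratedDeriv_succ_id_mul (hf.contDiffAt_of_isOpen isOpen_ball hz), hfg hz, hV]
    push_cast
    ring

lemma iteratedDeriv_id_mul_zero {n : ℕ} {r : ℝ} {f : ℂ → ℂ} (hr : 0 < r)
    (hf : DifferentiableOn ℂ f (ball 0 r)) (hf0 : ∀ m < n, iteratedDeriv m f 0 = 0) :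
    ∀ m < n, iteratedDeriv m (fun z => z * f z) 0 = 0 := by
  rintro (_ | m) hm
  · simp
  · rw [iteratedDeriv_succ_id_mul (hf.contDiffAt_of_isOpen isOpen_ball (mem_ball_self hr)),
      hf0 m (by omega)]
    simp

def iteratedDerivPreimage (n : ℕ) (p : ℝ) (M : Set (ℂ → ℂ)) : Set (ℂ → ℂ) :=
  {f | MemS0 n p f ∧ iteratedDeriv n f ∈ M}

section iteratedDerivPreimage

variable {n : ℕ} {p : ℝ} {M : Set (ℂ → ℂ)}

lemma mem_iteratedDerivPreimage_of_eqOn (hM : ∀ g ∈ M, MemHp p g)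
    (hagree : ∀ g g', g ∈ M → DifferentiableOn ℂ g' (ball 0 1) → EqOn g g' (ball (0:ℂ) 1) →
      g' ∈ M)
    {f g : ℂ → ℂ} (hf : DifferentiableOn ℂ f (ball 0 1))
    (hf0 : ∀ m < n, iteratedDeriv m f 0 = 0) (hg : g ∈ M)
    (hfg : EqOn (iteratedDeriv n f) g (ball 0 1)) :
    f ∈ iteratedDerivPreimage n p M :=
  ⟨⟨⟨hf, hardyNorm_congr hfg ▸ (hM g hg).2⟩, hf0⟩,
    hagree g _ hg (hf.iteratedDeriv_of_isOpen isOpen_ball n) hfg.symm⟩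

lemma zero_mem_iteratedDerivPreimage (hM : ∀ g ∈ M, MemHp p g)
    (hagree : ∀ g g', g ∈ M → DifferentiableOn ℂ g' (ball 0 1) → EqOn g g' (ball (0:ℂ) 1) →
      g' ∈ M)
    (hzero : (fun _ => (0:ℂ)) ∈ M) :
    (fun _ => (0:ℂ)) ∈ iteratedDerivPreimage n p M :=
  mem_iteratedDerivPreimage_of_eqOn hM hagree (differentiableOn_const 0)
    (fun m _ => by simp) hzero fun z _ => by simp

lemma add_mem_iteratedDerivPreimage (hM : ∀ g ∈ M, MemHp p g)
    (hagree : ∀ g g', g ∈ M → DifferentiableOn ℂ g' (ball 0 1) → EqOn g g' (ball (0:ℂ) 1) →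
      g' ∈ M)
    (hadd : ∀ f g, f ∈ M → g ∈ M → (fun z => f z + g z) ∈ M) {f g : ℂ → ℂ}
    (hf : f ∈ iteratedDerivPreimage n p M) (hg : g ∈ iteratedDerivPreimage n p M) :
    (fun z => f z + g z) ∈ iteratedDerivPreimage n p M := by
  have hfd := hf.1.1.1
  have hgd := hg.1.1.1
  have hsum : ∀ m, ∀ z ∈ ball (0:ℂ) 1,
      iteratedDeriv m (fun z => f z + g z) z = iteratedDeriv m f z + iteratedDeriv m g z :=
    fun m z hz => iteratedDeriv_fun_add (hfd.contDiffAt_of_isOpen isOpen_ball hz)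
      (hgd.contDiffAt_of_isOpen isOpen_ball hz)
  refine mem_iteratedDerivPreimage_of_eqOn hM hagree (hfd.add hgd) (fun m hm => ?_)
    (hadd _ _ hf.2 hg.2) (hsum n)
  rw [hsum m 0 (mem_ball_self one_pos), hf.1.2 m hm, hg.1.2 m hm, add_zero]

lemma const_mul_mem_iteratedDerivPreimage (hM : ∀ g ∈ M, MemHp p g)
    (hagree : ∀ g g', g ∈ M → DifferentiableOn ℂ g' (ball 0 1) → EqOn g g' (ball (0:ℂ) 1) →
      g' ∈ M)
    (hsmul : ∀ (c : ℂ) f, f ∈ M → (fun z => c * f z) ∈ M) (c : ℂ) {f : ℂ → ℂ}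
    (hf : f ∈ iteratedDerivPreimage n p M) :
    (fun z => c * f z) ∈ iteratedDerivPreimage n p M :=
  mem_iteratedDerivPreimage_of_eqOn hM hagree (hf.1.1.1.const_smul c)
    (fun m hm => by simp [hf.1.2 m hm]) (hsmul c _ hf.2) fun z _ => by simp

lemma mem_iteratedDerivPreimage_of_tendsto
    (hclosed : ∀ (F : ℕ → ℂ → ℂ) (g : ℂ → ℂ), (∀ k, F k ∈ M) → MemHp p g →
      Tendsto (fun k => hardyNorm p (fun z => F k z - g z)) atTop (nhds 0) → g ∈ M)
    {F : ℕ → ℂ → ℂ} {f : ℂ → ℂ} (hF : ∀ k, F k ∈ iteratedDerivPreimage n p M)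
    (hf : MemS0 n p f)
    (hlim : Tendsto (fun k => snNorm n p (fun z => F k z - f z)) atTop (nhds 0)) :
    f ∈ iteratedDerivPreimage n p M := by
  refine ⟨hf, hclosed (fun k => iteratedDeriv n (F k)) _ (fun k => (hF k).2)
    ⟨hf.1.1.iteratedDeriv_of_isOpen isOpen_ball n, hf.1.2⟩ ?_⟩
  refine tendsto_of_tendsto_of_tendsto_of_le_of_le tendsto_const_nhds hlim (fun _ => bot_le)
    fun k => ?_
  calc hardyNorm p (fun z => iteratedDeriv n (F k) z - iteratedDeriv n f z)
      = hardyNorm p (iteratedDeriv n (fun z => F k z - f z)) :=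
        hardyNorm_congr fun z hz => (iteratedDeriv_fun_sub
          ((hF k).1.1.1.contDiffAt_of_isOpen isOpen_ball hz)
          (hf.1.1.contDiffAt_of_isOpen isOpen_ball hz)).symm
    _ ≤ snNorm n p (fun z => F k z - f z) := hardyNorm_iteratedDeriv_le_snNorm_s18 n p _

lemma id_mul_mem_iteratedDerivPreimage (hM : ∀ g ∈ M, MemHp p g)
    (hagree : ∀ g g', g ∈ M → DifferentiableOn ℂ g' (ball 0 1) → EqOn g g' (ball (0:ℂ) 1) →
      g' ∈ M)
    (hT : ∀ g ∈ M, (fun z => z * g z + (n:ℂ) * Volterra g z) ∈ M) {f : ℂ → ℂ}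
    (hf : f ∈ iteratedDerivPreimage n p M) :
    (fun z => z * f z) ∈ iteratedDerivPreimage n p M :=
  mem_iteratedDerivPreimage_of_eqOn hM hagree (differentiableOn_id.mul hf.1.1.1)
    (iteratedDeriv_id_mul_zero one_pos hf.1.1.1 hf.1.2) (hT _ hf.2)
    (iteratedDeriv_id_mul_eqOn hf.1.1.1 hf.1.2 (eqOn_refl _ _))

lemma eq_setOf_iteratedDeriv_eqOn (hM : ∀ g ∈ M, MemHp p g)
    (hagree : ∀ g g', g ∈ M → DifferentiableOn ℂ g' (ball 0 1) → EqOn g g' (ball (0:ℂ) 1) →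
      g' ∈ M) :
    M = {g | ∃ f ∈ iteratedDerivPreimage n p M, EqOn (iteratedDeriv n f) g (ball 0 1)} := by
  ext g
  refine ⟨fun hg => ?_, fun ⟨f, hf, hfg⟩ => hagree _ g hf.2 ?_ hfg⟩
  · obtain ⟨f, hfd, hf0, hfg⟩ := exists_iteratedDeriv_eqOn_ball one_pos (hM g hg).1 n
    exact ⟨f, mem_iteratedDerivPreimage_of_eqOn hM hagree hfd hf0 hg hfg, hfg⟩
  · exact (hf.1.1.1.iteratedDeriv_of_isOpen isOpen_ball n).congr fun z hz => (hfg hz).symm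

end iteratedDerivPreimage

theorem invariant_subspaces_of_T_general (n : ℕ) (p : ℝ)
    (M : Set (ℂ → ℂ))
    (hM : ∀ g ∈ M, MemHp p g)
    (hzero : (fun _ => (0:ℂ)) ∈ M)
    (hadd : ∀ f g, f ∈ M → g ∈ M → (fun z => f z + g z) ∈ M)
    (hsmul : ∀ (c : ℂ) f, f ∈ M → (fun z => c * f z) ∈ M)
    (hclosed : ∀ (F : ℕ → ℂ → ℂ) (g : ℂ → ℂ), (∀ k, F k ∈ M) → MemHp p g →
      Filter.Tendsto (fun k => hardyNorm p (fun z => F k z - g z)) Filter.atTop (nhds 0) →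
      g ∈ M)
    (hagree : ∀ g g', g ∈ M → DifferentiableOn ℂ g' (Metric.ball 0 1) →
      Set.EqOn g g' (Metric.ball (0:ℂ) 1) → g' ∈ M) :
    (∀ g ∈ M, (fun z => z * g z + (n:ℂ) * Volterra g z) ∈ M) ↔
      ∃ J : Set (ℂ → ℂ),
        (∀ f ∈ J, MemS0 n p f) ∧
        (fun _ => (0:ℂ)) ∈ J ∧
        (∀ f g, f ∈ J → g ∈ J → (fun z => f z + g z) ∈ J) ∧
        (∀ (c : ℂ) f, f ∈ J → (fun z => c * f z) ∈ J) ∧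
        (∀ (F : ℕ → ℂ → ℂ) (f : ℂ → ℂ), (∀ k, F k ∈ J) → MemS0 n p f →
          Filter.Tendsto (fun k => snNorm n p (fun z => F k z - f z)) Filter.atTop (nhds 0) →
          f ∈ J) ∧
        (∀ f ∈ J, (fun z => z * f z) ∈ J) ∧
        M = {g | ∃ f ∈ J, Set.EqOn (iteratedDeriv n f) g (Metric.ball (0:ℂ) 1)} := by
  constructor
  · intro hT
    exact ⟨iteratedDerivPreimage n p M, fun f hf => hf.1,
      zero_mem_iteratedDerivPreimage hM hagree hzero,
      fun f g => add_mem_iteratedDerivPreimage hM hagree hadd,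
      fun c f => const_mul_mem_iteratedDerivPreimage hM hagree hsmul c,
      fun F f => mem_iteratedDerivPreimage_of_tendsto hclosed,
      fun f => id_mul_mem_iteratedDerivPreimage hM hagree hT,
      eq_setOf_iteratedDeriv_eqOn hM hagree⟩
  · rintro ⟨J, hJ, -, -, -, -, hJ_mul, rfl⟩ g ⟨f, hfJ, hfg⟩
    exact ⟨fun z => z * f z, hJ_mul f hfJ,
      iteratedDeriv_id_mul_eqOn (hJ f hfJ).1.1 (hJ f hfJ).2 hfg⟩

theorem invariant_subspaces_of_T (n : ℕ) (p : ℝ) (hn : 1 ≤ n) (hp : 1 ≤ p)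
    (M : Set (ℂ → ℂ))
    (hM : ∀ g ∈ M, MemHp p g)
    (hzero : (fun _ => (0:ℂ)) ∈ M)
    (hadd : ∀ f g, f ∈ M → g ∈ M → (fun z => f z + g z) ∈ M)
    (hsmul : ∀ (c : ℂ) f, f ∈ M → (fun z => c * f z) ∈ M)
    (hclosed : ∀ (F : ℕ → ℂ → ℂ) (g : ℂ → ℂ), (∀ k, F k ∈ M) → MemHp p g →
      Filter.Tendsto (fun k => hardyNorm p (fun z => F k z - g z)) Filter.atTop (nhds 0) →
      g ∈ M)
    (hagree : ∀ g g', g ∈ M → DifferentiableOn ℂ g' (Metric.ball 0 1) →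
      Set.EqOn g g' (Metric.ball (0:ℂ) 1) → g' ∈ M) :
    (∀ g ∈ M, (fun z => z * g z + (n:ℂ) * Volterra g z) ∈ M) ↔
      ∃ J : Set (ℂ → ℂ),
        (∀ f ∈ J, MemS0 n p f) ∧
        (fun _ => (0:ℂ)) ∈ J ∧
        (∀ f g, f ∈ J → g ∈ J → (fun z => f z + g z) ∈ J) ∧
        (∀ (c : ℂ) f, f ∈ J → (fun z => c * f z) ∈ J) ∧
        (∀ (F : ℕ → ℂ → ℂ) (f : ℂ → ℂ), (∀ k, F k ∈ J) → MemS0 n p f →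
          Filter.Tendsto (fun k => snNorm n p (fun z => F k z - f z)) Filter.atTop (nhds 0) →
          f ∈ J) ∧
        (∀ f ∈ J, (fun z => z * f z) ∈ J) ∧
        M = {g | ∃ f ∈ J, Set.EqOn (iteratedDeriv n f) g (Metric.ball (0:ℂ) 1)} :=
  invariant_subspaces_of_T_general n p M hM hzero hadd hsmul hclosed hagree
end
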